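/- Let (A,ā) ∈ G = GL(2,ℤ) ⋉ 𝕋². Then (A,ā) is strongly reversible in G (i.e. reversed by an involution of G) if and only if there exists τ ∈ GL(2,ℤ) with τ² = I, τAτ⁻¹ = A⁻¹, and (Aτ + I)·ā ∈ Im(A − I) as a subset of 𝕋², where additionally a vector r̄ solving (Aτ+I)·ā + (A−I)·r̄ ≡ 0 can be chosen with (τ + I)·r̄ ≡ 0 (mod ℤ²). -/

import Mathlib

/-! Write a candidate involution as `h = (τ, r)`. The condition `h² = 1` splits into `τ² = I`
and `(τ + I)·r = 0`. The condition `h (A, a) h⁻¹ = (A, a)⁻¹` splits into `τAτ⁻¹ = A⁻¹` and an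
equation on the torus; applying the automorphism `A` to the latter and using `τAτ⁻¹ = A⁻¹` turns
it into `(Aτ + I)·a + (A - I)·r = 0`. -/

noncomputable section

abbrev V : Type := Fin 2 → ℝ

def L : AddSubgroup V where
  carrier := {x | ∀ i, ∃ n : ℤ, x i = (n : ℝ)}
  zero_mem' := fun i => ⟨0, by simp⟩
  add_mem' := by
    rintro a b ha hb i
    obtain ⟨m, hm⟩ := ha i
    obtain ⟨n, hn⟩ := hb i
    exact ⟨m + n, by simp [hm, hn]⟩
  neg_mem' := by
    rintro a ha i
    obtain ⟨m, hm⟩ := ha i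
    exact ⟨-m, by simp [hm]⟩

abbrev T2 := V ⧸ L

def actV (A : Matrix (Fin 2) (Fin 2) ℤ) : V →+ V :=
  (Matrix.mulVecLin (A.map (Int.cast : ℤ → ℝ))).toAddMonoidHom

lemma actV_mem (A : Matrix (Fin 2) (Fin 2) ℤ) : L ≤ L.comap (actV A) := by
  intro x hx
  show actV A x ∈ L
  intro i
  refine ⟨∑ j, A i j * Classical.choose (hx j), ?_⟩
  show (A.map (Int.cast : ℤ → ℝ)).mulVec x i = _
  simp only [Matrix.mulVec, dotProduct, Matrix.map_apply]
  push_cast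
  exact Finset.sum_congr rfl fun j _ =>
    congrArg (fun t => ((A i j : ℝ)) * t) (Classical.choose_spec (hx j))

/-- The action of an integer matrix on the torus `T2`. -/
def act (A : Matrix (Fin 2) (Fin 2) ℤ) : T2 →+ T2 :=
  QuotientAddGroup.map L L (actV A) (actV_mem A)

abbrev GL2 := (Matrix (Fin 2) (Fin 2) ℤ)ˣ

/-- Multiplication in the group `G = GL(2,ℤ) ⋉ 𝕋²`. -/
def Gmul (p q : GL2 × T2) : GL2 × T2 :=
  (p.1 * q.1, act (p.1 : Matrix (Fin 2) (Fin 2) ℤ) q.2 + p.2)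

/-- Inversion in the group `G = GL(2,ℤ) ⋉ 𝕋²`. -/
def Ginv (p : GL2 × T2) : GL2 × T2 :=
  (p.1⁻¹, -act ((p.1⁻¹ : GL2) : Matrix (Fin 2) (Fin 2) ℤ) p.2)

lemma actV_apply (M : Matrix (Fin 2) (Fin 2) ℤ) (x : V) :
    actV M x = (M.map (Int.castRingHom ℝ)).mulVec x := rfl

lemma act_mk (M : Matrix (Fin 2) (Fin 2) ℤ) (x : V) :
    act M (x : T2) = (actV M x : T2) := rfl

lemma act_one (x : T2) : act 1 x = x := by
  induction x using QuotientAddGroup.induction_on with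
  | H x => rw [act_mk, actV_apply, Matrix.map_one _ (map_zero _) (map_one _), Matrix.one_mulVec]

lemma act_mul (M N : Matrix (Fin 2) (Fin 2) ℤ) (x : T2) :
    act (M * N) x = act M (act N x) := by
  induction x using QuotientAddGroup.induction_on with
  | H x => simp only [act_mk, actV_apply, Matrix.map_mul, Matrix.mulVec_mulVec]

lemma act_add (M N : Matrix (Fin 2) (Fin 2) ℤ) (x : T2) :
    act (M + N) x = act M x + act N x := by
  induction x using QuotientAddGroup.induction_on with
  | H x =>
    simp only [act_mk, actV_apply, Matrix.map_add _ (map_add _), Matrix.add_mulVec,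
      QuotientAddGroup.mk_add]

lemma act_sub (M N : Matrix (Fin 2) (Fin 2) ℤ) (x : T2) :
    act (M - N) x = act M x - act N x :=
  eq_sub_of_add_eq (by rw [← act_add, sub_add_cancel])

lemma act_units_injective (U : GL2) : Function.Injective (act U) :=
  Function.LeftInverse.injective (g := act ↑U⁻¹)
    fun x => by rw [← act_mul, U.inv_mul, act_one]

lemma Gmul_self_eq_one_iff (τ : GL2) (r : T2) :
    Gmul (τ, r) (τ, r) = (1, 0) ↔
      (τ * τ : Matrix (Fin 2) (Fin 2) ℤ) = 1 ∧ act (↑τ + 1) r = 0 := by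
  rw [Gmul, Prod.mk.injEq, Units.ext_iff, Units.val_mul, Units.val_one, act_add, act_one]

lemma Gmul_conj_eq_Ginv_iff (τ A : GL2) (r a : T2) :
    Gmul (Gmul (τ, r) (A, a)) (Ginv (τ, r)) = Ginv (A, a) ↔
      τ * A * τ⁻¹ = A⁻¹ ∧
        act ((A : Matrix (Fin 2) (Fin 2) ℤ) * τ + 1) a + act (↑A - 1) r = 0 := by
  simp only [Gmul, Ginv, Prod.mk.injEq]
  refine and_congr_right fun hconj => ?_
  have hr : act A (act ↑(τ * A) (act ↑τ⁻¹ r)) = r := by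
    rw [← act_mul, ← act_mul, ← Units.val_mul, ← Units.val_mul, mul_assoc A, hconj,
      mul_inv_cancel, Units.val_one, act_one]
  have ha : act A (act ↑A⁻¹ a) = a := by
    rw [← act_mul, A.mul_inv, act_one]
  rw [← (act_units_injective A).eq_iff, ← sub_eq_zero]
  simp only [map_add, map_neg]
  rw [hr, ha, ← act_mul, act_add, act_sub, act_one, act_one]
  rw [show ∀ x y z w : T2, -x + (y + w) - -z = y + z + (w - x) from fun _ _ _ _ => by abel]

/-- `(A,ā) ∈ G = GL(2,ℤ) ⋉ 𝕋²` is strongly reversible (reversed by an involution of `G`)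
iff there exists `τ ∈ GL(2,ℤ)` with `τ² = I`, `τAτ⁻¹ = A⁻¹`, and a vector `r̄ ∈ 𝕋²` with
`(Aτ + I)·ā + (A - I)·r̄ ≡ 0` and `(τ + I)·r̄ ≡ 0 (mod ℤ²)`. -/
theorem strongly_reversible_iff (A : GL2) (a : T2) :
    (∃ h : GL2 × T2, Gmul h h = (1, 0) ∧
        Gmul (Gmul h (A, a)) (Ginv h) = Ginv (A, a)) ↔
    (∃ τ : GL2, ∃ r : T2,
      (τ : Matrix (Fin 2) (Fin 2) ℤ) * (τ : Matrix (Fin 2) (Fin 2) ℤ) = 1 ∧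
      τ * A * τ⁻¹ = A⁻¹ ∧
      act ((A : Matrix (Fin 2) (Fin 2) ℤ) * (τ : Matrix (Fin 2) (Fin 2) ℤ) + 1) a +
        act ((A : Matrix (Fin 2) (Fin 2) ℤ) - 1) r = 0 ∧
      act ((τ : Matrix (Fin 2) (Fin 2) ℤ) + 1) r = 0) := by
  simp only [Prod.exists, Gmul_self_eq_one_iff, Gmul_conj_eq_Ginv_iff]
  exact exists₂_congr fun _ _ => by tauto
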